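/- Let N ∈ ℕ, α ∈ (0,1), and let (D₁, …, D_{N+1}) be real-valued random variables on a probability space whose joint distribution is invariant under every permutation of the N+1 coordinates (exchangeability). Let k := ⌈(1−α)(N+1)⌉ and suppose k ≤ N, and let q denote the k-th smallest value among D₁, …, D_N. Then P(D_{N+1} ≤ q) ≥ 1 − α. -/

import Mathlib

/-!
Write `rank i` for the number of scores strictly below `D i`. If `rank (N+1) < k`, fewer than
`k` calibration scores lie below `D (N+1)`, so it does not exceed their `k`-th smallest value.
For every outcome at least `k` indices have `rank < k`, and by exchangeability the `N + 1` events
`rank i < k` have equal probability. Hence `(N + 1) P(rank (N+1) < k) ≥ k ≥ (1 - α)(N + 1)`.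
-/

open MeasureTheory Finset

lemma List.countP_ofFn {α : Type*} {n : ℕ} (f : Fin n → α) (p : α → Prop)
    [DecidablePred p] :
    (List.ofFn f).countP (fun a => decide (p a)) = #{i | p (f i)} := by
  rw [← Multiset.coe_countP, ← Fin.univ_val_map, Multiset.countP_map]
  rfl

lemma List.le_getElem_of_countP_lt_le {α : Type*} [LinearOrder α] {l : List α}
    (hl : l.Pairwise (· ≤ ·)) {m : ℕ} (hm : m < l.length) {y : α}
    (hy : l.countP (· < y) ≤ m) : y ≤ l[m] := by
  induction l generalizing m with
  | nil => simp at hm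
  | cons a t ih =>
    rw [List.pairwise_cons] at hl
    by_cases hay : a < y
    · rcases m with _ | m
      · simp [hay] at hy
      · exact ih hl.2 _ (by simpa [hay] using hy)
    · rcases m with _ | m
      · exact not_lt.mp hay
      · exact (not_lt.mp hay).trans (hl.1 _ (List.getElem_mem _))

section StrictRank

variable {ι α : Type*} [Fintype ι] [LinearOrder α]

def strictRank (x : ι → α) (i : ι) : ℕ := #{j | x j < x i}

lemma strictRank_comp_perm (x : ι → α) (σ : Equiv.Perm ι) (i : ι) :
    strictRank (x ∘ σ) i = strictRank x (σ i) := by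
  simp only [strictRank, card_filter, Function.comp_apply]
  exact Equiv.sum_comp σ fun j => if x j < x (σ i) then 1 else 0

lemma le_card_strictRank_lt (x : ι → α) {m : ℕ} (hm : m ≤ Fintype.card ι) :
    m ≤ #{i | strictRank x i < m} := by
  classical
  set S : Finset ι := {i | strictRank x i < m}
  by_contra! hS
  have hSc : Sᶜ.Nonempty := by
    rw [← card_pos, card_compl]
    omega
  -- A minimal value outside `S` has only elements of `S` strictly below it, so it lies in `S`.
  obtain ⟨i₀, hi₀, hmin⟩ := exists_min_image _ x hSc
  have hbelow : ({j | x j < x i₀} : Finset ι) ⊆ S := fun j hj => by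
    by_contra hjS
    exact (mem_filter.mp hj).2.not_ge (hmin j (mem_compl.mpr hjS))
  exact mem_compl.mp hi₀ (mem_filter.mpr ⟨mem_univ _, (card_le_card hbelow).trans_lt hS⟩)

lemma measurableSet_strictRank_lt [TopologicalSpace α] [MeasurableSpace α]
    [OpensMeasurableSpace α] [OrderClosedTopology α] [SecondCountableTopology α]
    (i : ι) (m : ℕ) :
    MeasurableSet {x : ι → α | strictRank x i < m} := by
  have : Measurable fun x : ι → α => strictRank x i := by
    simp only [strictRank, card_filter]
    exact Finset.measurable_sum _ fun j _ => Measurable.ite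
      (measurableSet_lt (measurable_pi_apply j) (measurable_pi_apply i))
      measurable_const measurable_const
  exact this measurableSet_Iio

end StrictRank

lemma last_le_mergeSort_getD_of_strictRank_lt {α : Type*} [LinearOrder α] {n k : ℕ}
    (hk : k ≤ n) (x : Fin (n + 1) → α) (hx : strictRank x (Fin.last n) < k) (d : α) :
    x (Fin.last n) ≤
      ((List.ofFn fun i : Fin n => x i.castSucc).mergeSort (· ≤ ·)).getD (k - 1) d := by
  set l := (List.ofFn fun i : Fin n => x i.castSucc).mergeSort (· ≤ ·)
  have hlen : l.length = n := by simp [l]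
  have hcount : l.countP (· < x (Fin.last n)) = strictRank x (Fin.last n) := by
    rw [(List.mergeSort_perm _ _).countP_eq, List.countP_ofFn, strictRank, card_filter, card_filter,
      Fin.sum_univ_castSucc]
    simp
  rw [List.getD_eq_getElem _ _ (by omega)]
  exact List.le_getElem_of_countP_lt_le (List.pairwise_mergeSort' _ _) _
    (hcount.trans_le (by omega))

section Exchangeable

variable {Ω ι β : Type*} {mΩ : MeasurableSpace Ω} [MeasurableSpace β]

def Exchangeable (μ : Measure Ω) (D : ι → Ω → β) : Prop :=
  ∀ σ : Equiv.Perm ι, μ.map (fun ω i => D (σ i) ω) = μ.map (fun ω i => D i ω)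

lemma Exchangeable.measure_preimage_perm {μ : Measure Ω} {D : ι → Ω → β}
    (h : Exchangeable μ D) (hD : ∀ i, Measurable (D i)) {S : Set (ι → β)}
    (hS : MeasurableSet S) (σ : Equiv.Perm ι) :
    μ ((fun ω i => D (σ i) ω) ⁻¹' S) = μ ((fun ω i => D i ω) ⁻¹' S) := by
  rw [← Measure.map_apply (measurable_pi_lambda _ fun i => hD (σ i)) hS, h σ,
    Measure.map_apply (measurable_pi_lambda _ hD) hS]

lemma Exchangeable.measure_strictRank_lt_eq [Fintype ι] [DecidableEq ι] [LinearOrder β]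
    [TopologicalSpace β] [OpensMeasurableSpace β] [OrderClosedTopology β]
    [SecondCountableTopology β]
    {μ : Measure Ω} {D : ι → Ω → β} (h : Exchangeable μ D) (hD : ∀ i, Measurable (D i))
    (i j : ι) (m : ℕ) :
    μ {ω | strictRank (D · ω) i < m} = μ {ω | strictRank (D · ω) j < m} := by
  have key := h.measure_preimage_perm hD (measurableSet_strictRank_lt j m) (Equiv.swap i j)
  have hswap : ∀ ω, strictRank (fun l => D (Equiv.swap i j l) ω) j = strictRank (D · ω) i :=
    fun ω => (strictRank_comp_perm (D · ω) _ j).trans (by rw [Equiv.swap_apply_right])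
  simpa only [Set.preimage_ofPred_eq, hswap] using key

end Exchangeable

lemma natCast_le_sum_measure_of_le_card {Ω ι : Type*} {mΩ : MeasurableSpace Ω} [Fintype ι]
    {μ : Measure Ω} [IsProbabilityMeasure μ] {p : ι → Ω → Prop}
    [∀ i ω, Decidable (p i ω)] (hp : ∀ i, MeasurableSet {ω | p i ω}) {m : ℕ}
    (hm : ∀ ω, m ≤ #{i | p i ω}) :
    (m : ENNReal) ≤ ∑ i, μ {ω | p i ω} :=
  calc (m : ENNReal) = ∫⁻ _, (m : ENNReal) ∂μ := by simp
    _ ≤ ∫⁻ ω, ∑ i, {ω | p i ω}.indicator 1 ω ∂μ := lintegral_mono fun ω => by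
        simp only [Set.indicator_apply, Pi.one_apply, sum_boole]
        exact_mod_cast hm ω
    _ = ∑ i, μ {ω | p i ω} := by
        rw [lintegral_finsetSum _ fun i _ => measurable_one.indicator (hp i)]
        simp [lintegral_indicator_one (hp _)]

lemma ENNReal.ofReal_le_of_mul_le_natCast {r : ℝ} {n k : ℕ} {p : ENNReal} (hn : n ≠ 0)
    (hr : r * n ≤ k) (hp : (k : ENNReal) ≤ n * p) : ENNReal.ofReal r ≤ p :=
  calc ENNReal.ofReal r ≤ ENNReal.ofReal (k / n) :=
        ENNReal.ofReal_le_ofReal ((le_div_iff₀ (by positivity)).mpr hr)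
    _ = (k : ENNReal) / n := by
        rw [ENNReal.ofReal_div_of_pos (by positivity), ENNReal.ofReal_natCast,
          ENNReal.ofReal_natCast]
    _ ≤ p := ENNReal.div_le_of_le_mul' hp

theorem split_conformal_coverage_general
    {Ω : Type*} {mΩ : MeasurableSpace Ω} (μ : Measure Ω) [IsProbabilityMeasure μ]
    (N : ℕ) (α : ℝ)
    (D : Fin (N + 1) → Ω → ℝ) (hD : ∀ i, Measurable (D i))
    (hexch : ∀ σ : Equiv.Perm (Fin (N + 1)),
      Measure.map (fun ω (i : Fin (N + 1)) => D (σ i) ω) μ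
        = Measure.map (fun ω (i : Fin (N + 1)) => D i ω) μ)
    (k : ℕ) (hk : k = ⌈(1 - α) * (N + 1 : ℝ)⌉₊) (hkN : k ≤ N)
    (q : Ω → ℝ)
    (hq : ∀ ω, q ω =
      (((List.ofFn fun i : Fin N => D i.castSucc ω).mergeSort (· ≤ ·)).getD (k - 1) 0)) :
    ENNReal.ofReal (1 - α) ≤ μ {ω | D (Fin.last N) ω ≤ q ω} := by
  set E : Fin (N + 1) → Set Ω := fun i => {ω | strictRank (D · ω) i < k}
  have hcount : (k : ENNReal) ≤ ∑ i, μ (E i) :=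
    natCast_le_sum_measure_of_le_card
      (fun i => (measurableSet_strictRank_lt i k).preimage (measurable_pi_lambda _ hD))
      fun ω => le_card_strictRank_lt _ (by simpa using hkN.trans N.le_succ)
  have hsame : ∑ i, μ (E i) = (N + 1 : ℕ) * μ (E (Fin.last N)) := by
    simp [E, Exchangeable.measure_strictRank_lt_eq hexch hD _ (Fin.last N)]
  have hcover : E (Fin.last N) ⊆ {ω | D (Fin.last N) ω ≤ q ω} := fun ω hω => by
    rw [Set.mem_ofPred_eq, hq]
    exact last_le_mergeSort_getD_of_strictRank_lt hkN _ hω 0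
  calc ENNReal.ofReal (1 - α) ≤ μ (E (Fin.last N)) :=
        ENNReal.ofReal_le_of_mul_le_natCast N.succ_ne_zero
          (by rw [hk]; exact_mod_cast Nat.le_ceil _) (hsame ▸ hcount)
    _ ≤ _ := measure_mono hcover

/-- Split conformal prediction coverage guarantee: if the scores
`D 0, …, D N` (the first `N` being calibration scores, the last one the test
score) are exchangeable, `k = ⌈(1-α)(N+1)⌉ ≤ N`, and `q` is the `k`-th
smallest of the calibration scores, then `P(D_{N+1} ≤ q) ≥ 1 - α`. -/
theorem split_conformal_coverage
    {Ω : Type*} {mΩ : MeasurableSpace Ω} (μ : Measure Ω) [IsProbabilityMeasure μ]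
    (N : ℕ) (α : ℝ) (hα : α ∈ Set.Ioo (0 : ℝ) 1)
    (D : Fin (N + 1) → Ω → ℝ) (hD : ∀ i, Measurable (D i))
    (hexch : ∀ σ : Equiv.Perm (Fin (N + 1)),
      Measure.map (fun ω (i : Fin (N + 1)) => D (σ i) ω) μ
        = Measure.map (fun ω (i : Fin (N + 1)) => D i ω) μ)
    (k : ℕ) (hk : k = ⌈(1 - α) * (N + 1 : ℝ)⌉₊) (hkN : k ≤ N)
    (q : Ω → ℝ)
    (hq : ∀ ω, q ω =
      (((List.ofFn fun i : Fin N => D i.castSucc ω).mergeSort (· ≤ ·)).getD (k - 1) 0)) :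
    ENNReal.ofReal (1 - α) ≤ μ {ω | D (Fin.last N) ω ≤ q ω} :=
  split_conformal_coverage_general (mΩ := mΩ) μ N α D hD hexch k hk hkN q hq
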